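/- arXiv:1909.00552 — 2 statements merged into one kernel-verified Lean document; each statement's English description precedes it below -/
import Mathlib

section
/- For any c > 0, t > 0, x ∈ ℝ² and κ' ∈ ℝ, the value (1/(2πct)) ∫_{B(x,ct)} (-(1/6) t κ' y₁³)/√(c²t² - |y-x|²) dy equals -(t κ'/6)(c²t² x₁ + x₁³). -/
open Real MeasureTheory Set

lemma aux_deriv (b : ℝ) (hb : 0 < b) (y : ℝ) (hy : y ∈ Set.Ioo (-b) b) :
    HasDerivAt (fun z => Real.arcsin (z / b)) ((Real.sqrt (b ^ 2 - y ^ 2))⁻¹) y := by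
  obtain ⟨h1, h2⟩ := hy
  have hb' : b ≠ 0 := hb.ne'
  have hyb1 : y / b ≠ -1 := by
    intro h
    have : y = -b := by field_simp at h; linarith
    linarith
  have hyb2 : y / b ≠ 1 := by
    intro h
    have : y = b := by field_simp at h; linarith
    linarith
  have hpos : 0 < b ^ 2 - y ^ 2 := by nlinarith
  have hs : 0 < Real.sqrt (b ^ 2 - y ^ 2) := Real.sqrt_pos.2 hpos
  have h := (Real.hasDerivAt_arcsin hyb1 hyb2).comp y ((hasDerivAt_id y).div_const b)
  refine h.congr_deriv ?_
  have h3 : 1 - (y / b) ^ 2 = (b ^ 2 - y ^ 2) / b ^ 2 := by field_simp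
  rw [h3, Real.sqrt_div' (b ^ 2 - y ^ 2) (by positivity), Real.sqrt_sq hb.le]
  field_simp

lemma aux_int_on (b : ℝ) (hb : 0 < b) :
    IntegrableOn (fun y : ℝ => (Real.sqrt (b ^ 2 - y ^ 2))⁻¹) (Set.Ioc (-b) b) volume := by
  exact intervalIntegral.integrableOn_deriv_of_nonneg
    (g := fun z => Real.arcsin (z / b))
    ((Real.continuous_arcsin.comp (continuous_id.div_const b)).continuousOn)
    (fun y hy => aux_deriv b hb y hy)
    (fun y _ => inv_nonneg.2 (Real.sqrt_nonneg _))

lemma aux_int_val (b : ℝ) (hb : 0 < b) :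
    ∫ y in Set.Ioc (-b) b, (Real.sqrt (b ^ 2 - y ^ 2))⁻¹ = π := by
  have hle : -b ≤ b := by linarith
  rw [← intervalIntegral.integral_of_le hle]
  rw [intervalIntegral.integral_eq_sub_of_hasDerivAt_of_le
    (f := fun z => Real.arcsin (z / b)) hle
    ((Real.continuous_arcsin.comp (continuous_id.div_const b)).continuousOn)
    (fun y hy => aux_deriv b hb y hy)
    ((intervalIntegrable_iff_integrableOn_Ioc_of_le hle).2 (aux_int_on b hb))]
  rw [div_self hb.ne', neg_div, div_self hb.ne']
  rw [Real.arcsin_one, Real.arcsin_neg, Real.arcsin_one]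
  ring

lemma aux_indicator (v : ℝ) :
    (fun y : ℝ => (Real.sqrt (v - y ^ 2))⁻¹)
      = Set.indicator (Set.Ioc (-Real.sqrt v) (Real.sqrt v))
          (fun y => (Real.sqrt (v - y ^ 2))⁻¹) := by
  funext y
  by_cases hy : y ∈ Set.Ioc (-Real.sqrt v) (Real.sqrt v)
  · rw [Set.indicator_of_mem hy]
  · rw [Set.indicator_of_notMem hy]
    have hs : Real.sqrt v ^ 2 = v ∨ v ≤ 0 := by
      rcases le_or_gt v 0 with h | h
      · exact Or.inr h
      · exact Or.inl (Real.sq_sqrt h.le)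
    have : v - y ^ 2 ≤ 0 := by
      simp only [Set.mem_Ioc, not_and_or, not_lt, not_le] at hy
      rcases hs with h | h
      · rcases hy with h1 | h1
        · nlinarith [Real.sqrt_nonneg v]
        · nlinarith [Real.sqrt_nonneg v]
      · nlinarith
    rw [Real.sqrt_eq_zero_of_nonpos this, inv_zero]

lemma aux_integrable (v : ℝ) :
    Integrable (fun y : ℝ => (Real.sqrt (v - y ^ 2))⁻¹) volume := by
  rcases le_or_gt v 0 with h | h
  · have : (fun y : ℝ => (Real.sqrt (v - y ^ 2))⁻¹) = fun _ => 0 := by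
      funext y
      rw [Real.sqrt_eq_zero_of_nonpos (by nlinarith), inv_zero]
    rw [this]; exact integrable_zero _ _ _
  · rw [aux_indicator v]
    have h2 : IntegrableOn (fun y : ℝ => (Real.sqrt (v - y ^ 2))⁻¹)
        (Set.Ioc (-Real.sqrt v) (Real.sqrt v)) volume := by
      simpa only [Real.sq_sqrt h.le] using aux_int_on (Real.sqrt v) (Real.sqrt_pos.2 h)
    exact h2.integrable_indicator measurableSet_Ioc

lemma aux_val (v : ℝ) :
    ∫ y : ℝ, (Real.sqrt (v - y ^ 2))⁻¹ = if 0 < v then π else 0 := by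
  rcases le_or_gt v 0 with h | h
  · rw [if_neg (not_lt.2 h)]
    have : (fun y : ℝ => (Real.sqrt (v - y ^ 2))⁻¹) = fun _ => 0 := by
      funext y
      rw [Real.sqrt_eq_zero_of_nonpos (by nlinarith), inv_zero]
    rw [this]; exact integral_zero _ _
  · rw [if_pos h, aux_indicator v, integral_indicator measurableSet_Ioc]
    have := aux_int_val (Real.sqrt v) (Real.sqrt_pos.2 h)
    simpa only [Real.sq_sqrt h.le] using this
lemma aux_main (c t a K : ℝ) (hc : 0 < c) (ht : 0 < t) :
    ∫ p : ℝ × ℝ,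
      (K * (a + p.1) ^ 3) / Real.sqrt (c ^ 2 * t ^ 2 - (p.1 ^ 2 + p.2 ^ 2))
    = (K * π) * (((a + c * t) ^ 4 - (a + -(c * t)) ^ 4) / 4) := by
  have hR : 0 < c * t := mul_pos hc ht
  have halg : ∀ s y : ℝ, c ^ 2 * t ^ 2 - (s ^ 2 + y ^ 2)
      = (c ^ 2 * t ^ 2 - s ^ 2) - y ^ 2 := fun s y => by ring
  simp only [halg]
  have hmeas : Measurable (fun p : ℝ × ℝ =>
      (K * (a + p.1) ^ 3) / Real.sqrt ((c ^ 2 * t ^ 2 - p.1 ^ 2) - p.2 ^ 2)) := by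
    apply Measurable.div
    · fun_prop
    · exact (Real.continuous_sqrt.comp (by continuity)).measurable
  -- pointwise norm computation
  have hnorm : ∀ s y : ℝ,
      ‖(K * (a + s) ^ 3) / Real.sqrt ((c ^ 2 * t ^ 2 - s ^ 2) - y ^ 2)‖
        = ‖K * (a + s) ^ 3‖ * (Real.sqrt ((c ^ 2 * t ^ 2 - s ^ 2) - y ^ 2))⁻¹ := by
    intro s y
    rw [norm_div, div_eq_mul_inv]
    congr 1
    rw [Real.norm_eq_abs, abs_of_nonneg (Real.sqrt_nonneg _)]
  have hIoo : ∀ s : ℝ, (0 < c ^ 2 * t ^ 2 - s ^ 2) ↔ s ∈ Ioo (-(c * t)) (c * t) := by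
    intro s
    constructor
    · intro h
      constructor <;> nlinarith
    · rintro ⟨h1, h2⟩
      nlinarith
  have hint : Integrable (fun p : ℝ × ℝ =>
      (K * (a + p.1) ^ 3) / Real.sqrt ((c ^ 2 * t ^ 2 - p.1 ^ 2) - p.2 ^ 2)) volume := by
    rw [Measure.volume_eq_prod]
    refine (integrable_prod_iff ?_).2 ⟨?_, ?_⟩
    · rw [← Measure.volume_eq_prod]; exact hmeas.aestronglyMeasurable
    · refine ae_of_all _ fun s => ?_
      simp only [div_eq_mul_inv]
      exact (aux_integrable (c ^ 2 * t ^ 2 - s ^ 2)).const_mul _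
    · have hval : ∀ s : ℝ,
          (∫ y : ℝ, ‖(K * (a + s) ^ 3) / Real.sqrt ((c ^ 2 * t ^ 2 - s ^ 2) - y ^ 2)‖)
            = ‖K * (a + s) ^ 3‖ * (if 0 < c ^ 2 * t ^ 2 - s ^ 2 then π else 0) := by
        intro s
        simp only [hnorm]
        rw [MeasureTheory.integral_const_mul, aux_val]
      simp only [hval]
      have heq : (fun s : ℝ => ‖K * (a + s) ^ 3‖ * (if 0 < c ^ 2 * t ^ 2 - s ^ 2 then π else 0))
          = Set.indicator (Ioo (-(c * t)) (c * t)) (fun s => ‖K * (a + s) ^ 3‖ * π) := by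
        funext s
        by_cases hs : s ∈ Ioo (-(c * t)) (c * t)
        · rw [Set.indicator_of_mem hs, if_pos ((hIoo s).2 hs)]
        · rw [Set.indicator_of_notMem hs, if_neg (fun h => hs ((hIoo s).1 h)), mul_zero]
      rw [heq]
      refine IntegrableOn.integrable_indicator ?_ measurableSet_Ioo
      refine IntegrableOn.mono_set ?_ Set.Ioo_subset_Icc_self
      exact (Continuous.integrableOn_Icc (by continuity))
  rw [Measure.volume_eq_prod, integral_prod _ (by rw [← Measure.volume_eq_prod]; exact hint)]
  have inner : ∀ s : ℝ,
      (∫ y : ℝ, (K * (a + s) ^ 3) / Real.sqrt ((c ^ 2 * t ^ 2 - s ^ 2) - y ^ 2))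
        = (K * (a + s) ^ 3) * (if 0 < c ^ 2 * t ^ 2 - s ^ 2 then π else 0) := by
    intro s
    simp only [div_eq_mul_inv]
    rw [MeasureTheory.integral_const_mul, aux_val]
  simp only [inner]
  have heq2 : (fun s : ℝ => (K * (a + s) ^ 3) * (if 0 < c ^ 2 * t ^ 2 - s ^ 2 then π else 0))
      = Set.indicator (Ioo (-(c * t)) (c * t)) (fun s => (K * π) * (a + s) ^ 3) := by
    funext s
    by_cases hs : s ∈ Ioo (-(c * t)) (c * t)
    · rw [Set.indicator_of_mem hs, if_pos ((hIoo s).2 hs)]; ring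
    · rw [Set.indicator_of_notMem hs, if_neg (fun h => hs ((hIoo s).1 h)), mul_zero]
  rw [heq2, integral_indicator measurableSet_Ioo, ← integral_Ioc_eq_integral_Ioo,
    ← intervalIntegral.integral_of_le (by linarith : -(c * t) ≤ c * t),
    intervalIntegral.integral_const_mul, intervalIntegral.integral_comp_add_left
      (fun u : ℝ => u ^ 3) a, integral_pow]
  norm_num

theorem stmt_13 (c t : ℝ) (hc : 0 < c) (ht : 0 < t) (x : EuclideanSpace ℝ (Fin 2)) (κ' : ℝ) :
    (1 / (2 * π * c * t)) *
      ∫ y in Metric.ball x (c * t),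
        (-(1 / 6) * t * κ' * y 0 ^ 3) / Real.sqrt (c ^ 2 * t ^ 2 - ‖y - x‖ ^ 2)
    = -(t * κ' / 6) * (c ^ 2 * t ^ 2 * x 0 + x 0 ^ 3) := by
  have hR : 0 < c * t := mul_pos hc ht
  -- Step 1: extend to whole space
  rw [setIntegral_eq_integral_of_forall_compl_eq_zero (fun y hy => by
    have h1 : c * t ≤ ‖y - x‖ := by
      rw [Metric.mem_ball, dist_eq_norm] at hy
      linarith [not_lt.1 hy]
    have h2 : c ^ 2 * t ^ 2 - ‖y - x‖ ^ 2 ≤ 0 := by nlinarith [norm_nonneg (y - x)]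
    rw [Real.sqrt_eq_zero_of_nonpos h2, div_zero])]
  -- Step 2: translate
  rw [← MeasureTheory.integral_add_left_eq_self
    (fun y : EuclideanSpace ℝ (Fin 2) =>
      (-(1 / 6) * t * κ' * y 0 ^ 3) / Real.sqrt (c ^ 2 * t ^ 2 - ‖y - x‖ ^ 2)) x]
  simp only [add_sub_cancel_left]
  -- Step 3: transfer to ℝ × ℝ
  have htrans : ∫ z : EuclideanSpace ℝ (Fin 2),
      (-(1 / 6) * t * κ' * (x + z) 0 ^ 3) / Real.sqrt (c ^ 2 * t ^ 2 - ‖z‖ ^ 2)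
      = ∫ p : ℝ × ℝ,
        (-(1 / 6) * t * κ' * (x 0 + p.1) ^ 3)
          / Real.sqrt (c ^ 2 * t ^ 2 - (p.1 ^ 2 + p.2 ^ 2)) := by
    have mp : MeasurePreserving
        ((MeasurableEquiv.finTwoArrow (α := ℝ)) ∘ (MeasurableEquiv.toLp 2 (Fin 2 → ℝ)).symm)
        volume volume :=
      (volume_preserving_finTwoArrow ℝ).comp
        (EuclideanSpace.volume_preserving_symm_measurableEquiv_toLp (Fin 2))
    rw [← mp.integral_comp
      ((MeasurableEquiv.toLp 2 (Fin 2 → ℝ)).symm.trans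
        (MeasurableEquiv.finTwoArrow)).measurableEmbedding
      (fun p : ℝ × ℝ =>
        (-(1 / 6) * t * κ' * (x 0 + p.1) ^ 3)
          / Real.sqrt (c ^ 2 * t ^ 2 - (p.1 ^ 2 + p.2 ^ 2)))]
    congr 1
    funext z
    have h1 : (x + z) 0 = x 0 + z 0 := rfl
    have h2 : ‖z‖ ^ 2 = z 0 ^ 2 + z 1 ^ 2 := by
      rw [EuclideanSpace.norm_eq, Real.sq_sqrt (by positivity)]
      simp [Fin.sum_univ_two]
    rw [h1, h2]
    rfl
  rw [htrans, aux_main c t (x 0) (-(1 / 6) * t * κ') hc ht]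
  have hπ : π ≠ 0 := pi_ne_zero
  field_simp
  ring
end

section
/- For any c > 0, t > 0, x ∈ ℝ² and κ ∈ ℝ, the value (1/(2πct)) ∫_{B(x,ct)} ((1/2) t κ² y₁² y₂)/√(c²t² - |y-x|²) dy equals t κ² (c²t² x₂/6 + x₁² x₂/2). -/
open Real MeasureTheory Set Filter intervalIntegral

open Real MeasureTheory Set Filter intervalIntegral

-- derivative of arcsin(v/w)
lemma deriv_arcsin_div {w : ℝ} (hw : 0 < w) {v : ℝ} (hv : v ∈ Ioo (-w) w) :
    HasDerivAt (fun v : ℝ => Real.arcsin (v / w)) (1 / Real.sqrt (w ^ 2 - v ^ 2)) v := by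
  have h1 : v / w ≠ -1 := by
    intro h
    have hvw : v = -w := by field_simp at h; linarith
    rw [hvw] at hv; exact absurd hv.1 (lt_irrefl _)
  have h2 : v / w ≠ 1 := by
    intro h
    have hvw : v = w := by
      field_simp at h; exact h
    rw [hvw] at hv; exact absurd hv.2 (lt_irrefl _)
  have := (Real.hasDerivAt_arcsin h1 h2).comp v ((hasDerivAt_id v).div_const w)
  refine this.congr_deriv ?_
  have hs : Real.sqrt (1 - (v / w) ^ 2) = Real.sqrt (w ^ 2 - v ^ 2) / w := by
    have e1 : 1 - (v / w) ^ 2 = (w ^ 2 - v ^ 2) / w ^ 2 := by field_simp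
    rw [e1, Real.sqrt_div (by nlinarith [hv.1, hv.2]), Real.sqrt_sq hw.le]
  rw [hs]
  have hsp : 0 < Real.sqrt (w ^ 2 - v ^ 2) := by
    apply Real.sqrt_pos.2; nlinarith [hv.1, hv.2]
  field_simp

lemma deriv_neg_sqrt {w : ℝ} (hw : 0 < w) {v : ℝ} (hv : v ∈ Ioo (-w) w) :
    HasDerivAt (fun v : ℝ => -Real.sqrt (w ^ 2 - v ^ 2)) (v / Real.sqrt (w ^ 2 - v ^ 2)) v := by
  have hpos : 0 < w ^ 2 - v ^ 2 := by nlinarith [hv.1, hv.2]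
  have hinner : HasDerivAt (fun v : ℝ => w ^ 2 - v ^ 2) (-(2 * v)) v := by
    simpa using ((hasDerivAt_pow 2 v).const_sub (w ^ 2))
  have := (Real.hasDerivAt_sqrt hpos.ne').comp v hinner
  refine this.neg.congr_deriv ?_
  field_simp

lemma integrableOn_one_div_sqrt {w : ℝ} (hw : 0 < w) :
    IntegrableOn (fun v : ℝ => 1 / Real.sqrt (w ^ 2 - v ^ 2)) (Ioo (-w) w) := by
  have := intervalIntegral.integrableOn_deriv_of_nonneg
    (g := fun v : ℝ => Real.arcsin (v / w))
    (g' := fun v : ℝ => 1 / Real.sqrt (w ^ 2 - v ^ 2)) (a := -w) (b := w)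
    (Real.continuous_arcsin.comp (continuous_id.div_const w)).continuousOn
    (fun v hv => deriv_arcsin_div hw hv)
    (fun v hv => by positivity)
  exact this.mono_set Ioo_subset_Ioc_self

lemma integral_one_div_sqrt' {w : ℝ} (hw : 0 < w) :
    ∫ v in Ioo (-w) w, 1 / Real.sqrt (w ^ 2 - v ^ 2) = π := by
  have key := intervalIntegral.integral_eq_sub_of_hasDerivAt_of_tendsto
    (f := fun v : ℝ => Real.arcsin (v / w))
    (f' := fun v : ℝ => 1 / Real.sqrt (w ^ 2 - v ^ 2))
    (a := -w) (b := w) (by linarith)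
    (fun v hv => deriv_arcsin_div hw hv)
    (by rw [intervalIntegrable_iff_integrableOn_Ioo_of_le (by linarith)]
        exact integrableOn_one_div_sqrt hw)
    (fa := Real.arcsin (-w / w)) (fb := Real.arcsin (w / w))
    (((Real.continuous_arcsin.comp (continuous_id.div_const w)).tendsto _).mono_left
      nhdsWithin_le_nhds)
    (((Real.continuous_arcsin.comp (continuous_id.div_const w)).tendsto _).mono_left
      nhdsWithin_le_nhds)
  rw [intervalIntegral.integral_of_le (by linarith)] at key
  rw [← integral_Ioc_eq_integral_Ioo, key, div_self hw.ne', neg_div, div_self hw.ne']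
  simp [Real.arcsin_one, Real.arcsin_neg]
  try ring

lemma integrableOn_id_div_sqrt {w : ℝ} (hw : 0 < w) :
    IntegrableOn (fun v : ℝ => v / Real.sqrt (w ^ 2 - v ^ 2)) (Ioo (-w) w) := by
  refine (integrableOn_one_div_sqrt hw).smul (c := w) |>.mono'
    ?_ ?_
  · refine (Measurable.aestronglyMeasurable ?_)
    exact measurable_id.div ((measurable_const.sub (measurable_id.pow_const 2)).sqrt)
  · filter_upwards [ae_restrict_mem measurableSet_Ioo] with v hv
    have hsp : 0 < Real.sqrt (w ^ 2 - v ^ 2) := by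
      apply Real.sqrt_pos.2; nlinarith [hv.1, hv.2]
    simp only [Pi.smul_apply, smul_eq_mul, Real.norm_eq_abs]
    rw [abs_div, abs_of_pos hsp, mul_one_div, div_le_div_iff₀ hsp hsp]
    have : |v| ≤ w := by
      rw [abs_le]; exact ⟨hv.1.le, hv.2.le⟩
    nlinarith [hsp]

lemma integral_id_div_sqrt {w : ℝ} (hw : 0 < w) :
    ∫ v in Ioo (-w) w, v / Real.sqrt (w ^ 2 - v ^ 2) = 0 := by
  have key := intervalIntegral.integral_eq_sub_of_hasDerivAt_of_tendsto
    (f := fun v : ℝ => -Real.sqrt (w ^ 2 - v ^ 2))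
    (f' := fun v : ℝ => v / Real.sqrt (w ^ 2 - v ^ 2))
    (a := -w) (b := w) (by linarith)
    (fun v hv => deriv_neg_sqrt hw hv)
    (by rw [intervalIntegrable_iff_integrableOn_Ioo_of_le (by linarith)]
        exact integrableOn_id_div_sqrt hw)
    (fa := -Real.sqrt (w ^ 2 - (-w) ^ 2) ) (fb := -Real.sqrt (w ^ 2 - w ^ 2))
    (((by fun_prop : Continuous (fun v : ℝ => -Real.sqrt (w ^ 2 - v ^ 2))).tendsto _).mono_left
      nhdsWithin_le_nhds)
    (((by fun_prop : Continuous (fun v : ℝ => -Real.sqrt (w ^ 2 - v ^ 2))).tendsto _).mono_left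
      nhdsWithin_le_nhds)
  rw [intervalIntegral.integral_of_le (by linarith)] at key
  rw [← integral_Ioc_eq_integral_Ioo, key]
  simp

lemma integrableOn_affine_div_sqrt {w : ℝ} (hw : 0 < w) (b : ℝ) :
    IntegrableOn (fun v : ℝ => (b + v) / Real.sqrt (w ^ 2 - v ^ 2)) (Ioo (-w) w) := by
  have h := ((integrableOn_one_div_sqrt hw).smul (c := b)).add (integrableOn_id_div_sqrt hw)
  refine h.congr (Filter.Eventually.of_forall (fun v => ?_))
  simp only [Pi.add_apply, Pi.smul_apply, smul_eq_mul]
  ring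

lemma integral_affine_div_sqrt {w : ℝ} (hw : 0 < w) (b : ℝ) :
    ∫ v in Ioo (-w) w, (b + v) / Real.sqrt (w ^ 2 - v ^ 2) = b * π := by
  have e : ∀ v : ℝ, (b + v) / Real.sqrt (w ^ 2 - v ^ 2)
      = b * (1 / Real.sqrt (w ^ 2 - v ^ 2)) + v / Real.sqrt (w ^ 2 - v ^ 2) := by
    intro v; ring
  rw [setIntegral_congr_fun measurableSet_Ioo (fun v _ => e v),
    integral_add ((integrableOn_one_div_sqrt hw).const_mul b) (integrableOn_id_div_sqrt hw),
    MeasureTheory.integral_const_mul, integral_one_div_sqrt' hw, integral_id_div_sqrt hw, add_zero]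

noncomputable def hfun (r a b K : ℝ) : ℝ × ℝ → ℝ := fun p =>
  Set.indicator {q : ℝ × ℝ | q.1 ^ 2 + q.2 ^ 2 < r ^ 2}
    (fun q => (K * (a + q.1) ^ 2 * (b + q.2)) / Real.sqrt (r ^ 2 - q.1 ^ 2 - q.2 ^ 2)) p

lemma hfun_slice_lt (r a b K : ℝ) (hr : 0 < r) {u : ℝ} (hu : |u| < r) :
    (fun v => hfun r a b K (u, v)) =
      (Ioo (-(Real.sqrt (r ^ 2 - u ^ 2))) (Real.sqrt (r ^ 2 - u ^ 2))).indicator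
        (fun v => (K * (a + u) ^ 2) * ((b + v) / Real.sqrt (Real.sqrt (r ^ 2 - u ^ 2) ^ 2 - v ^ 2))) := by
  set w := Real.sqrt (r ^ 2 - u ^ 2) with hw
  have hru : 0 < r ^ 2 - u ^ 2 := by
    have := abs_lt.1 hu; nlinarith
  have hw2 : w ^ 2 = r ^ 2 - u ^ 2 := Real.sq_sqrt hru.le
  have hwpos : 0 < w := Real.sqrt_pos.2 hru
  funext v
  have hmem : (u, v) ∈ {q : ℝ × ℝ | q.1 ^ 2 + q.2 ^ 2 < r ^ 2} ↔ v ∈ Ioo (-w) w := by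
    simp only [mem_setOf_eq, mem_Ioo]
    constructor
    · intro hlt
      have : v ^ 2 < w ^ 2 := by rw [hw2]; linarith
      exact abs_lt.1 (abs_lt_of_sq_lt_sq this hwpos.le)
    · intro hlt
      have : v ^ 2 < w ^ 2 := by nlinarith [hlt.1, hlt.2]
      rw [hw2] at this; linarith
  by_cases h : v ∈ Ioo (-w) w
  · rw [hfun, indicator_of_mem h, indicator_of_mem (hmem.2 h)]
    rw [hw2]
    rw [mul_div_assoc]
  · rw [hfun, indicator_of_notMem h, indicator_of_notMem (fun hc => h (hmem.1 hc))]

lemma hfun_slice_ge (r a b K : ℝ) (hr : 0 < r) {u : ℝ} (hu : r ≤ |u|) :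
    (fun v => hfun r a b K (u, v)) = fun _ => 0 := by
  funext v
  rw [hfun]
  apply indicator_of_notMem
  simp only [mem_setOf_eq, not_lt]
  have : r ^ 2 ≤ u ^ 2 := by
    nlinarith [sq_abs u, abs_nonneg u]
  nlinarith [sq_nonneg v]

lemma hfun_measurable (r a b K : ℝ) : Measurable (hfun r a b K) := by
  apply Measurable.indicator
  · apply Measurable.div
    · fun_prop
    · fun_prop
  · exact measurableSet_lt (by fun_prop) measurable_const

lemma hfun_integrable (r a b K : ℝ) (hr : 0 < r) : Integrable (hfun r a b K) := by
  set C := |K| * (|a| + r) ^ 2 * (|b| + r) with hC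
  have hC0 : 0 ≤ C := by positivity
  rw [Measure.volume_eq_prod,
    MeasureTheory.integrable_prod_iff (hfun_measurable r a b K).aestronglyMeasurable]
  constructor
  · refine ae_of_all _ (fun u => ?_)
    rcases lt_or_ge (|u|) r with hu | hu
    · rw [hfun_slice_lt r a b K hr hu]
      set w := Real.sqrt (r ^ 2 - u ^ 2)
      have hwpos : 0 < w := Real.sqrt_pos.2 (by nlinarith [(abs_lt.1 hu).1, (abs_lt.1 hu).2])
      have hint : IntegrableOn
          (fun v => (K * (a + u) ^ 2) * ((b + v) / Real.sqrt (w ^ 2 - v ^ 2))) (Ioo (-w) w) :=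
        (integrableOn_affine_div_sqrt hwpos b).const_mul _
      exact hint.integrable_indicator measurableSet_Ioo
    · rw [hfun_slice_ge r a b K hr hu]
      exact integrable_zero _ _ _
  · set B : ℝ → ℝ := (Ioo (-r) r).indicator (fun _ => C * π) with hB
    have hBint : Integrable B := by
      have : IntegrableOn (fun _ : ℝ => C * π) (Ioo (-r) r) :=
        integrableOn_const measure_Ioo_lt_top.ne
      exact this.integrable_indicator measurableSet_Ioo
    refine Integrable.mono' hBint
      (((hfun_measurable r a b K).aestronglyMeasurable.norm).integral_prod_right')
      (ae_of_all _ (fun u => ?_))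
    rcases lt_or_ge (|u|) r with hu | hu
    · have hs := congrFun (hfun_slice_lt r a b K hr hu)
      simp only [hs]
      set w := Real.sqrt (r ^ 2 - u ^ 2) with hwdef
      have hru : 0 < r ^ 2 - u ^ 2 := by nlinarith [(abs_lt.1 hu).1, (abs_lt.1 hu).2]
      have hwpos : 0 < w := Real.sqrt_pos.2 hru
      have hwler : w ≤ r := by
        rw [hwdef]
        calc Real.sqrt (r ^ 2 - u ^ 2) ≤ Real.sqrt (r ^ 2) :=
              Real.sqrt_le_sqrt (by nlinarith [sq_nonneg u])
          _ = r := Real.sqrt_sq hr.le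
      set φ : ℝ → ℝ := fun v => (K * (a + u) ^ 2) * ((b + v) / Real.sqrt (w ^ 2 - v ^ 2)) with hφ
      have hnormeq : ∀ v, ‖(Ioo (-w) w).indicator φ v‖
          = (Ioo (-w) w).indicator (fun v => ‖φ v‖) v := fun v =>
        norm_indicator_eq_indicator_norm φ v
      have h1 : (∫ v, ‖(Ioo (-w) w).indicator φ v‖) = ∫ v in Ioo (-w) w, ‖φ v‖ := by
        rw [funext hnormeq]
        exact integral_indicator measurableSet_Ioo
      have hφint : IntegrableOn φ (Ioo (-w) w) :=
        (integrableOn_affine_div_sqrt hwpos b).const_mul _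
      have hbound : ∀ v ∈ Ioo (-w) w, ‖φ v‖ ≤ C * (1 / Real.sqrt (w ^ 2 - v ^ 2)) := by
        intro v hv
        have hsp : 0 < Real.sqrt (w ^ 2 - v ^ 2) :=
          Real.sqrt_pos.2 (by nlinarith [hv.1, hv.2])
        have h2 : |a + u| ≤ |a| + r := le_trans (abs_add_le a u) (by linarith [hu.le])
        have h3 : |b + v| ≤ |b| + r := by
          have := abs_add_le b v
          have hv' : |v| ≤ w := by rw [abs_le]; exact ⟨hv.1.le, hv.2.le⟩
          linarith
        have hnum : |K| * |a + u| ^ 2 * |b + v| ≤ C := by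
          rw [hC]; gcongr
        rw [hφ]
        simp only [norm_mul, norm_div, Real.norm_eq_abs, abs_pow]
        rw [abs_of_pos hsp]
        have heq : |K| * |a + u| ^ 2 * (|b + v| / Real.sqrt (w ^ 2 - v ^ 2))
            = (|K| * |a + u| ^ 2 * |b + v|) / Real.sqrt (w ^ 2 - v ^ 2) := by ring
        rw [heq, mul_one_div]
        gcongr
      have h2 : (∫ v in Ioo (-w) w, ‖φ v‖)
          ≤ ∫ v in Ioo (-w) w, C * (1 / Real.sqrt (w ^ 2 - v ^ 2)) :=
        setIntegral_mono_on hφint.norm ((integrableOn_one_div_sqrt hwpos).const_mul C)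
          measurableSet_Ioo hbound
      have h3 : (∫ v in Ioo (-w) w, C * (1 / Real.sqrt (w ^ 2 - v ^ 2))) = C * π := by
        rw [MeasureTheory.integral_const_mul, integral_one_div_sqrt' hwpos]
      have h4 : (0:ℝ) ≤ ∫ v, ‖(Ioo (-w) w).indicator φ v‖ :=
        integral_nonneg (fun v => norm_nonneg _)
      rw [Real.norm_of_nonneg h4, hB]
      have humem : u ∈ Ioo (-r) r := by
        rw [mem_Ioo]; exact abs_lt.1 hu
      rw [indicator_of_mem humem]
      calc (∫ v, ‖(Ioo (-w) w).indicator φ v‖) = ∫ v in Ioo (-w) w, ‖φ v‖ := h1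
        _ ≤ C * π := h3 ▸ h2
    · have hs := congrFun (hfun_slice_ge r a b K hr hu)
      simp only [hs, norm_zero, MeasureTheory.integral_zero, norm_zero]
      exact indicator_nonneg (fun _ _ => by positivity) u

lemma hfun_integral (r a b K : ℝ) (hr : 0 < r) :
    ∫ p : ℝ × ℝ, hfun r a b K p = K * b * π * (2 * a ^ 2 * r + 2 * r ^ 3 / 3) := by
  have hint := hfun_integrable r a b K hr
  rw [Measure.volume_eq_prod] at hint ⊢
  rw [MeasureTheory.integral_prod _ hint]
  have hinner : ∀ u : ℝ, (∫ v, hfun r a b K (u, v)) =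
      (Ioo (-r) r).indicator (fun u => (K * (b * π)) * (a + u) ^ 2) u := by
    intro u
    rcases lt_or_ge (|u|) r with hu | hu
    · rw [hfun_slice_lt r a b K hr hu]
      set w := Real.sqrt (r ^ 2 - u ^ 2) with hwdef
      have hru : 0 < r ^ 2 - u ^ 2 := by nlinarith [(abs_lt.1 hu).1, (abs_lt.1 hu).2]
      have hwpos : 0 < w := Real.sqrt_pos.2 hru
      rw [MeasureTheory.integral_indicator measurableSet_Ioo, MeasureTheory.integral_const_mul,
        integral_affine_div_sqrt hwpos b,
        indicator_of_mem (by rw [mem_Ioo]; exact abs_lt.1 hu)]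
      ring
    · rw [hfun_slice_ge r a b K hr hu, MeasureTheory.integral_zero,
        indicator_of_notMem]
      rw [mem_Ioo]
      intro hc
      exact absurd (abs_lt.2 hc) (not_lt.2 hu)
  rw [funext hinner, MeasureTheory.integral_indicator measurableSet_Ioo,
    ← integral_Ioc_eq_integral_Ioo, ← intervalIntegral.integral_of_le (by linarith)]
  rw [intervalIntegral.integral_const_mul]
  have hcomp := intervalIntegral.integral_comp_add_left (a := -r) (b := r)
    (fun x : ℝ => x ^ 2) a
  rw [hcomp, integral_pow]
  ring


noncomputable def ψ : ℝ × ℝ ≃ᵐ EuclideanSpace ℝ (Fin 2) :=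
  (MeasurableEquiv.finTwoArrow.symm).trans
    (MeasurableEquiv.toLp 2 (Fin 2 → ℝ))

example (p : ℝ × ℝ) : (ψ p) 0 = p.1 := rfl
example (p : ℝ × ℝ) : (ψ p) 1 = p.2 := rfl

example : MeasurePreserving (ψ : ℝ × ℝ → EuclideanSpace ℝ (Fin 2)) volume volume :=
  ((EuclideanSpace.volume_preserving_symm_measurableEquiv_toLp (Fin 2)).symm).comp
    (volume_preserving_finTwoArrow ℝ).symm

lemma norm_sq_eval (y x : EuclideanSpace ℝ (Fin 2)) :
    ‖y - x‖ ^ 2 = (y 0 - x 0) ^ 2 + (y 1 - x 1) ^ 2 := by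
  rw [EuclideanSpace.norm_eq, Real.sq_sqrt (by positivity)]
  simp [Fin.sum_univ_two, sq_abs]

lemma transfer (r K : ℝ) (hr : 0 < r) (x : EuclideanSpace ℝ (Fin 2)) :
    ∫ y in Metric.ball x r, (K * y 0 ^ 2 * y 1) / Real.sqrt (r ^ 2 - ‖y - x‖ ^ 2)
      = K * (x 1) * π * (2 * (x 0) ^ 2 * r + 2 * r ^ 3 / 3) := by
  set a := x 0
  set b := x 1
  set f : EuclideanSpace ℝ (Fin 2) → ℝ :=
    fun y => (K * y 0 ^ 2 * y 1) / Real.sqrt (r ^ 2 - ‖y - x‖ ^ 2) with hf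
  have hψ : MeasurePreserving (ψ : ℝ × ℝ → EuclideanSpace ℝ (Fin 2)) volume volume :=
    ((EuclideanSpace.volume_preserving_symm_measurableEquiv_toLp (Fin 2)).symm).comp
      (volume_preserving_finTwoArrow ℝ).symm
  have step1 : (∫ y in Metric.ball x r, f y)
      = ∫ y, (Metric.ball x r).indicator f y :=
    (MeasureTheory.integral_indicator measurableSet_ball).symm
  have step2 : (∫ y, (Metric.ball x r).indicator f y)
      = ∫ p : ℝ × ℝ, (Metric.ball x r).indicator f (ψ p) :=
    (hψ.integral_comp ψ.measurableEmbedding _).symm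
  have step3 : (∫ p : ℝ × ℝ, (Metric.ball x r).indicator f (ψ p))
      = ∫ p : ℝ × ℝ, (Metric.ball x r).indicator f (ψ (p + (a, b))) :=
    (integral_add_right_eq_self (fun p : ℝ × ℝ => (Metric.ball x r).indicator f (ψ p)) (a, b)).symm
  have key : ∀ p : ℝ × ℝ, (Metric.ball x r).indicator f (ψ (p + (a, b))) = hfun r a b K p := by
    intro p
    have hev0 : (ψ (p + (a, b))) 0 = p.1 + a := rfl
    have hev1 : (ψ (p + (a, b))) 1 = p.2 + b := rfl
    have hnsq : ‖ψ (p + (a, b)) - x‖ ^ 2 = p.1 ^ 2 + p.2 ^ 2 := by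
      rw [norm_sq_eval, hev0, hev1]
      ring
    have hmem : ψ (p + (a, b)) ∈ Metric.ball x r ↔ p ∈ {q : ℝ × ℝ | q.1 ^ 2 + q.2 ^ 2 < r ^ 2} := by
      rw [Metric.mem_ball, dist_eq_norm, mem_setOf_eq, ← hnsq]
      constructor
      · intro h; nlinarith [norm_nonneg (ψ (p + (a, b)) - x)]
      · intro h; nlinarith [norm_nonneg (ψ (p + (a, b)) - x)]
    by_cases hp : p ∈ {q : ℝ × ℝ | q.1 ^ 2 + q.2 ^ 2 < r ^ 2}
    · rw [indicator_of_mem (hmem.2 hp), hfun, indicator_of_mem hp, hf]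
      simp only
      rw [hev0, hev1, hnsq]
      rw [show r ^ 2 - (p.1 ^ 2 + p.2 ^ 2) = r ^ 2 - p.1 ^ 2 - p.2 ^ 2 by ring]
      rw [show K * (p.1 + a) ^ 2 * (p.2 + b) = K * (a + p.1) ^ 2 * (b + p.2) by ring]
    · rw [indicator_of_notMem (fun hc => hp (hmem.1 hc)), hfun, indicator_of_notMem hp]
  rw [step1, step2, step3, funext key, hfun_integral r a b K hr]

theorem stmt_14 (c t : ℝ) (hc : 0 < c) (ht : 0 < t) (x : EuclideanSpace ℝ (Fin 2)) (κ : ℝ) :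
    (1 / (2 * π * c * t)) *
      ∫ y in Metric.ball x (c * t),
        ((1 / 2) * t * κ ^ 2 * y 0 ^ 2 * y 1) / Real.sqrt (c ^ 2 * t ^ 2 - ‖y - x‖ ^ 2)
    = t * κ ^ 2 * (c ^ 2 * t ^ 2 * x 1 / 6 + x 0 ^ 2 * x 1 / 2) := by
  have hr : 0 < c * t := mul_pos hc ht
  have hre : ∀ y : EuclideanSpace ℝ (Fin 2),
      ((1 / 2) * t * κ ^ 2 * y 0 ^ 2 * y 1) / Real.sqrt (c ^ 2 * t ^ 2 - ‖y - x‖ ^ 2)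
      = ((1 / 2 * t * κ ^ 2) * y 0 ^ 2 * y 1) / Real.sqrt ((c * t) ^ 2 - ‖y - x‖ ^ 2) := by
    intro y
    rw [show (c * t) ^ 2 = c ^ 2 * t ^ 2 by ring]
  rw [setIntegral_congr_fun measurableSet_ball (fun y _ => hre y),
    transfer (c * t) (1 / 2 * t * κ ^ 2) hr x]
  have hπ : (π : ℝ) ≠ 0 := Real.pi_ne_zero
  field_simp
  ring
end
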